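/- arXiv:1506.06215 — 7 statements merged into one kernel-verified Lean document; each statement's English description precedes it below -/
import Mathlib

section
/- Let R be a random variable taking values in a finite set {r_1,...,r_n} of reals with p.m.f. p, let τ > 0 and η > 0, and define β(x) = E[max{x, R}] − τ/η. Let m = max{i : p_i > 0}. Then for any x, x' ≤ r_m, |β(x) − β(x')| ≤ (1 − p_m)|x − x'|; i.e., β restricted to (−∞, r_m] is a contraction mapping with modulus 1 − p_m < 1. -/
open Finset

/-- β restricted to (−∞, r m] is a contraction with modulus 1 − p m < 1. -/
theorem stmt0 {n : ℕ} (r : Fin n → ℝ) (hr : StrictMono r)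
    (p : Fin n → ℝ) (hp0 : ∀ i, 0 ≤ p i) (hp1 : ∑ i, p i = 1)
    (τ η : ℝ) (hτ : 0 < τ) (hη : 0 < η)
    (β : ℝ → ℝ) (hβ : ∀ x, β x = (∑ i, p i * max x (r i)) - τ / η)
    (m : Fin n) (hm : 0 < p m) (hmmax : ∀ i, 0 < p i → i ≤ m) :
    1 - p m < 1 ∧
    ∀ x x' : ℝ, x ≤ r m → x' ≤ r m → |β x - β x'| ≤ (1 - p m) * |x - x'| := by
  constructor
  · linarith
  intro x x' hx hx'
  have hsum : β x - β x' = ∑ i, p i * (max x (r i) - max x' (r i)) := by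
    rw [hβ, hβ]
    rw [Finset.sum_congr rfl (fun i _ => mul_sub (p i) (max x (r i)) (max x' (r i))),
      Finset.sum_sub_distrib]
    ring
  have hzero : p m * (max x (r m) - max x' (r m)) = 0 := by
    rw [max_eq_right hx, max_eq_right hx']
    ring
  have hsplit : β x - β x' = ∑ i ∈ univ.erase m, p i * (max x (r i) - max x' (r i)) := by
    rw [hsum, ← Finset.add_sum_erase _ _ (mem_univ m), hzero, zero_add]
  have hpsum : ∑ i ∈ univ.erase m, p i = 1 - p m := by
    have := Finset.add_sum_erase univ p (mem_univ m)
    linarith [hp1 ▸ this]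
  rw [hsplit]
  calc |∑ i ∈ univ.erase m, p i * (max x (r i) - max x' (r i))|
      ≤ ∑ i ∈ univ.erase m, |p i * (max x (r i) - max x' (r i))| :=
        Finset.abs_sum_le_sum_abs _ _
    _ ≤ ∑ i ∈ univ.erase m, p i * |x - x'| := by
        refine Finset.sum_le_sum fun i _ => ?_
        rw [abs_mul, abs_of_nonneg (hp0 i)]
        exact mul_le_mul_of_nonneg_left (abs_max_sub_max_le_abs _ _ _) (hp0 i)
    _ = (1 - p m) * |x - x'| := by rw [← Finset.sum_mul, hpsum]
end

section
/- The map β(x) = E[max{x, R}] − τ/η has a unique fixed point α* in (−∞, r_m], where m is the largest index with p_m > 0. -/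
open Finset

/-- β has a unique fixed point α* in (−∞, r m]. -/
theorem stmt2 {n : ℕ} (r : Fin n → ℝ) (hr : StrictMono r)
    (p : Fin n → ℝ) (hp0 : ∀ i, 0 ≤ p i) (hp1 : ∑ i, p i = 1)
    (τ η : ℝ) (hτ : 0 < τ) (hη : 0 < η)
    (β : ℝ → ℝ) (hβ : ∀ x, β x = (∑ i, p i * max x (r i)) - τ / η)
    (m : Fin n) (hm : 0 < p m) (hmmax : ∀ i, 0 < p i → i ≤ m) :
    ∃! α : ℝ, α ≤ r m ∧ β α = α := by
  have hτη : 0 < τ / η := div_pos hτ hη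
  -- β (r m) = r m - τ/η
  have hβrm : β (r m) = r m - τ / η := by
    rw [hβ]
    congr 1
    have h1 : ∀ i ∈ Finset.univ, p i * max (r m) (r i) = p i * r m := by
      intro i _
      rcases (hp0 i).eq_or_lt with h | h
      · rw [← h, zero_mul, zero_mul]
      · rw [max_eq_left (hr.monotone (hmmax i h))]
    rw [Finset.sum_congr rfl h1, ← Finset.sum_mul, hp1, one_mul]
  -- a lower anchor point
  set i0 : Fin n := ⟨0, m.pos⟩ with hi0
  set c : ℝ := (∑ i, p i * r i) - τ / η with hc
  set a : ℝ := min (r i0) c with ha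
  have hari : ∀ i, a ≤ r i := fun i =>
    le_trans (min_le_left _ _) (hr.monotone (by rw [Fin.le_def]; exact Nat.zero_le _))
  have hβa : β a = c := by
    rw [hβ, hc]
    congr 1
    exact Finset.sum_congr rfl fun i _ => by rw [max_eq_right (hari i)]
  have harm : a ≤ r m := hari m
  -- continuity of f := β - id
  have hβeq : β = fun x => (∑ i, p i * max x (r i)) - τ / η := funext hβ
  have hcont : Continuous fun x => β x - x := by
    rw [hβeq]
    exact ((continuous_finset_sum _ fun i _ =>
      continuous_const.mul (continuous_id.max continuous_const)).sub
      continuous_const).sub continuous_id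
  -- existence via IVT
  have hfa : 0 ≤ β a - a := by rw [hβa]; simp [ha]
  have hfb : β (r m) - r m ≤ 0 := by rw [hβrm]; linarith
  have hivt := intermediate_value_Icc' harm hcont.continuousOn
  obtain ⟨α, hαmem, hαfix⟩ := hivt (Set.mem_Icc.mpr ⟨hfb, hfa⟩)
  have hαrm : α ≤ r m := hαmem.2
  have hαβ : β α = α := sub_eq_zero.mp hαfix
  -- uniqueness key lemma: if x ≤ y ≤ r m are both fixed, then y ≤ x
  have key : ∀ x y : ℝ, x ≤ y → y ≤ r m → β x = x → β y = y → y ≤ x := by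
    intro x y hxy hyrm hfx hfy
    have hdiff : y - x = ∑ i, (p i * max y (r i) - p i * max x (r i)) := by
      rw [Finset.sum_sub_distrib]
      have := hβ x; have := hβ y
      linarith
    have hterm : ∀ i, max y (r i) - max x (r i) ≤ y - x := by
      intro i
      rcases le_total (r i) y with h | h
      · have h2 := le_max_left x (r i)
        rw [max_eq_left h]; linarith
      · rw [max_eq_right h]
        have h2 := le_max_right x (r i)
        linarith
    have htermm : p m * max y (r m) - p m * max x (r m) = 0 := by
      rw [max_eq_right hyrm, max_eq_right (hxy.trans hyrm)]; ring
    have hbound : ∑ i, (p i * max y (r i) - p i * max x (r i)) ≤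
        ∑ i ∈ Finset.univ.erase m, p i * (y - x) := by
      rw [← Finset.add_sum_erase _ _ (Finset.mem_univ m), htermm, zero_add]
      refine Finset.sum_le_sum fun i _ => ?_
      rw [← mul_sub]
      exact mul_le_mul_of_nonneg_left (hterm i) (hp0 i)
    have hsum_erase : ∑ i ∈ Finset.univ.erase m, p i = 1 - p m := by
      have := Finset.add_sum_erase Finset.univ p (Finset.mem_univ m)
      linarith [hp1 ▸ this]
    have : y - x ≤ (1 - p m) * (y - x) := by
      calc y - x = ∑ i, (p i * max y (r i) - p i * max x (r i)) := hdiff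
        _ ≤ ∑ i ∈ Finset.univ.erase m, p i * (y - x) := hbound
        _ = (1 - p m) * (y - x) := by rw [← Finset.sum_mul, hsum_erase]
    nlinarith
  refine ⟨α, ⟨hαrm, hαβ⟩, fun y ⟨hyrm, hyβ⟩ => ?_⟩
  rcases le_total y α with h | h
  · exact le_antisymm h (key y α h hαrm hyβ hαβ)
  · exact le_antisymm (key α y h hyrm hαβ hyβ) h
end

section
/- Define the value iteration J_0(r_i) = 0 and J_k(r_i) = min{−η r_i, τ + E[J_{k−1}(R)]} for k ≥ 1. Then for every k ≥ 1 there exists α_k such that J_k(r_i) = min{−η r_i, −η α_k} for all i, where α_1 = −τ/η and α_k = β(α_{k−1}) with β(x) = E[max{x, R}] − τ/η. -/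
open Finset

lemma neg_mul_max_eq (η x y : ℝ) (hη : 0 < η) :
    -η * max x y = min (-η * x) (-η * y) := by
  rcases le_total x y with h | h
  · rw [max_eq_right h, min_eq_right]
    nlinarith
  · rw [max_eq_left h, min_eq_left]
    nlinarith

/-- Value iteration: J k has the form min{−η r_i, −η α_k} with α_1 = −τ/η,
α_{k+1} = β(α_k). -/
theorem stmt3 {n : ℕ} (r : Fin n → ℝ) (hr : StrictMono r)
    (p : Fin n → ℝ) (hp0 : ∀ i, 0 ≤ p i) (hp1 : ∑ i, p i = 1)
    (τ η : ℝ) (hτ : 0 < τ) (hη : 0 < η)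
    (β : ℝ → ℝ) (hβ : ∀ x, β x = (∑ i, p i * max x (r i)) - τ / η)
    (J : ℕ → Fin n → ℝ) (hJ0 : ∀ i, J 0 i = 0)
    (hJ : ∀ k i, J (k + 1) i = min (-η * r i) (τ + ∑ i', p i' * J k i')) :
    ∃ a : ℕ → ℝ, a 1 = -τ / η ∧ (∀ k, 1 ≤ k → a (k + 1) = β (a k)) ∧
      ∀ k, 1 ≤ k → ∀ i, J k i = min (-η * r i) (-η * a k) := by
  set a : ℕ → ℝ := fun k => Nat.rec 0 (fun k ih => if k = 0 then -τ/η else β ih) k with ha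
  refine ⟨a, rfl, ?_, ?_⟩
  · intro k hk
    have hk' : k ≠ 0 := by omega
    simp [ha, hk']
  · intro k
    induction k with
    | zero => intro h; omega
    | succ k ih =>
      intro _ i
      rcases Nat.eq_zero_or_pos k with hk0 | hk0
      · subst hk0
        rw [hJ]
        have : ∑ i', p i' * J 0 i' = 0 := by
          simp [hJ0]
        rw [this]
        have : -η * a 1 = τ := by
          simp [ha]
          field_simp
        rw [← this]
        ring_nf
      · have hk' : k ≠ 0 := by omega
        rw [hJ]
        have hstep : τ + ∑ i', p i' * J k i' = -η * a (k + 1) := by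
          have hak : a (k + 1) = β (a k) := by simp [ha, hk']
          rw [hak, hβ]
          have : ∑ i', p i' * J k i' = ∑ i', p i' * (-η * max (a k) (r i')) := by
            apply Finset.sum_congr rfl
            intro i' _
            rw [ih hk0 i', neg_mul_max_eq η (a k) (r i') hη]
            rw [min_comm]
          rw [this]
          have hsum : ∑ i', p i' * (-η * max (a k) (r i'))
              = -η * ∑ i', p i' * max (a k) (r i') := by
            rw [Finset.mul_sum]
            apply Finset.sum_congr rfl
            intro i' _
            ring
          rw [hsum]
          field_simp
          ring
        rw [hstep]
end

section
/- With the value iteration J_k as above and α* the unique fixed point of β on (−∞, r_m], the iterates α_k = β(α_{k−1}) (with α_1 = −τ/η) converge to α*, and hence J_k(r_i) → min{−η r_i, −η α*} for every i. -/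
open Finset

/-- The iterates α_k = β(α_{k−1}) converge to the unique fixed point α*, and
J_k(r_i) → min{−η r_i, −η α*}. -/
theorem stmt4 {n : ℕ} (r : Fin n → ℝ) (hr : StrictMono r)
    (p : Fin n → ℝ) (hp0 : ∀ i, 0 ≤ p i) (hp1 : ∑ i, p i = 1)
    (τ η : ℝ) (hτ : 0 < τ) (hη : 0 < η)
    (β : ℝ → ℝ) (hβ : ∀ x, β x = (∑ i, p i * max x (r i)) - τ / η)
    (m : Fin n) (hm : 0 < p m) (hmmax : ∀ i, 0 < p i → i ≤ m)
    (αstar : ℝ) (hαle : αstar ≤ r m) (hαfix : β αstar = αstar)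
    (J : ℕ → Fin n → ℝ) (hJ0 : ∀ i, J 0 i = 0)
    (hJ : ∀ k i, J (k + 1) i = min (-η * r i) (τ + ∑ i', p i' * J k i'))
    (a : ℕ → ℝ) (ha1 : a 1 = -τ / η) (ha : ∀ k, 1 ≤ k → a (k + 1) = β (a k)) :
    Filter.Tendsto a Filter.atTop (nhds αstar) ∧
    ∀ i : Fin n, Filter.Tendsto (fun k => J k i) Filter.atTop
      (nhds (min (-η * r i) (-η * αstar))) := by
  have hηne : η ≠ 0 := ne_of_gt hη
  have hpm1 : p m ≤ 1 := by
    have := Finset.single_le_sum (fun i (_ : i ∈ univ) => hp0 i) (mem_univ m)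
    linarith [this.trans_eq hp1]
  -- p i = 0 for i beyond m
  have hpz : ∀ i : Fin n, ¬ i ≤ m → p i = 0 := by
    intro i h
    by_contra h'
    exact h (hmmax i (lt_of_le_of_ne (hp0 i) (Ne.symm h')))
  have hrle : ∀ i : Fin n, 0 < p i → r i ≤ r m := fun i h => hr.monotone (hmmax i h)
  -- β is monotone
  have hβmono : Monotone β := by
    intro x y hxy
    rw [hβ, hβ]
    have : ∀ i : Fin n, p i * max x (r i) ≤ p i * max y (r i) := fun i =>
      mul_le_mul_of_nonneg_left (max_le_max hxy le_rfl) (hp0 i)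
    have := Finset.sum_le_sum (fun i (_ : i ∈ univ) => this i)
    linarith
  -- β(r m) = r m - τ/η
  have hβrm : β (r m) = r m - τ / η := by
    rw [hβ]
    have : ∀ i ∈ univ, p i * max (r m) (r i) = p i * r m := by
      intro i _
      rcases eq_or_lt_of_le (hp0 i) with h | h
      · rw [← h]; ring
      · rw [max_eq_left (hrle i h)]
    rw [Finset.sum_congr rfl this, ← Finset.sum_mul, hp1, one_mul]
  have hβle : ∀ x, x ≤ r m → β x ≤ r m := by
    intro x hx
    have := hβmono hx
    rw [hβrm] at this
    have : τ / η > 0 := div_pos hτ hη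
    linarith [hβmono hx, hβrm]
  -- β x = x - τ/η for x ≥ r m
  have hβhigh : ∀ x, r m ≤ x → β x = x - τ / η := by
    intro x hx
    rw [hβ]
    have : ∀ i ∈ univ, p i * max x (r i) = p i * x := by
      intro i _
      rcases eq_or_lt_of_le (hp0 i) with h | h
      · rw [← h]; ring
      · rw [max_eq_left ((hrle i h).trans hx)]
    rw [Finset.sum_congr rfl this, ← Finset.sum_mul, hp1, one_mul]
  -- contraction on (-∞, r m]
  have hcontr : ∀ x y, x ≤ r m → y ≤ r m →
      |β x - β y| ≤ (1 - p m) * |x - y| := by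
    intro x y hx hy
    have hsub : β x - β y = ∑ i, p i * (max x (r i) - max y (r i)) := by
      have h1 : ∑ i, p i * (max x (r i) - max y (r i))
          = ∑ i, p i * max x (r i) - ∑ i, p i * max y (r i) := by
        rw [← Finset.sum_sub_distrib]
        exact Finset.sum_congr rfl (fun i _ => by ring)
      rw [hβ, hβ, h1]; ring
    have hterm_m : p m * (max x (r m) - max y (r m)) = 0 := by
      rw [max_eq_right hx, max_eq_right hy]; ring
    have hsplit : ∑ i, p i * (max x (r i) - max y (r i))
        = ∑ i ∈ univ.erase m, p i * (max x (r i) - max y (r i)) := by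
      rw [← Finset.add_sum_erase univ _ (mem_univ m), hterm_m, zero_add]
    have habs : ∀ i ∈ univ.erase m, |p i * (max x (r i) - max y (r i))|
        ≤ p i * |x - y| := by
      intro i _
      rw [abs_mul, abs_of_nonneg (hp0 i)]
      exact mul_le_mul_of_nonneg_left (abs_max_sub_max_le_abs _ _ _) (hp0 i)
    have hsum_erase : ∑ i ∈ univ.erase m, p i = 1 - p m := by
      have := Finset.add_sum_erase univ p (mem_univ m)
      rw [hp1] at this
      linarith
    calc |β x - β y| = |∑ i ∈ univ.erase m, p i * (max x (r i) - max y (r i))| := by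
          rw [hsub, hsplit]
      _ ≤ ∑ i ∈ univ.erase m, |p i * (max x (r i) - max y (r i))| :=
          Finset.abs_sum_le_sum_abs _ _
      _ ≤ ∑ i ∈ univ.erase m, p i * |x - y| := Finset.sum_le_sum habs
      _ = (1 - p m) * |x - y| := by rw [← Finset.sum_mul, hsum_erase]
  -- iterates eventually enter (-∞, r m]
  have hexN : ∃ N, 1 ≤ N ∧ a N ≤ r m := by
    by_contra h
    push_neg at h
    have hdesc : ∀ k : ℕ, a (k + 1) = a 1 - k * (τ / η) := by
      intro k
      induction k with
      | zero => simp
      | succ k ih =>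
        have h1 : r m < a (k + 1) := h (k + 1) (Nat.le_add_left 1 k)
        rw [ha (k + 1) (Nat.le_add_left 1 k), hβhigh _ h1.le, ih]
        push_cast; ring
    obtain ⟨k, hk⟩ := exists_nat_gt ((a 1 - r m) / (τ / η))
    have hτη : (0:ℝ) < τ / η := div_pos hτ hη
    have : a 1 - r m < k * (τ / η) := by
      rw [div_lt_iff₀ hτη] at hk
      linarith
    have h2 : a (k + 1) ≤ r m := by rw [hdesc k]; linarith
    exact absurd h2 (not_le.mpr (h (k + 1) (Nat.le_add_left 1 k)))
  obtain ⟨N, hN1, hNle⟩ := hexN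
  -- all iterates from N on stay in (-∞, r m]
  have hstay : ∀ k, N ≤ k → a k ≤ r m := by
    intro k hk
    induction k, hk using Nat.le_induction with
    | base => exact hNle
    | succ k hk ih =>
      rw [ha k (hN1.trans hk)]
      exact hβle _ ih
  have hpm0 : 0 ≤ 1 - p m := by linarith
  have hpmlt : 1 - p m < 1 := by linarith
  -- geometric bound
  have hgeom : ∀ j : ℕ, |a (N + j) - αstar| ≤ (1 - p m) ^ j * |a N - αstar| := by
    intro j
    induction j with
    | zero => simp
    | succ j ih =>
      have h1 : 1 ≤ N + j := le_trans hN1 (Nat.le_add_right N j)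
      have heq : a (N + (j + 1)) = β (a (N + j)) := by
        rw [show N + (j + 1) = (N + j) + 1 from rfl, ha _ h1]
      calc |a (N + (j + 1)) - αstar| = |β (a (N + j)) - β αstar| := by
            rw [heq, hαfix]
        _ ≤ (1 - p m) * |a (N + j) - αstar| :=
            hcontr _ _ (hstay _ (Nat.le_add_right N j)) hαle
        _ ≤ (1 - p m) * ((1 - p m) ^ j * |a N - αstar|) :=
            mul_le_mul_of_nonneg_left ih hpm0
        _ = (1 - p m) ^ (j + 1) * |a N - αstar| := by ring
  -- part 1: convergence of a
  have hconv : Filter.Tendsto a Filter.atTop (nhds αstar) := by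
    rw [← Filter.tendsto_add_atTop_iff_nat N]
    rw [tendsto_iff_dist_tendsto_zero]
    have hg : Filter.Tendsto (fun j : ℕ => (1 - p m) ^ j * |a N - αstar|)
        Filter.atTop (nhds 0) := by
      simpa using
        (tendsto_pow_atTop_nhds_zero_of_lt_one hpm0 hpmlt).mul_const |a N - αstar|
    exact squeeze_zero (fun j => dist_nonneg)
      (fun j => by rw [Real.dist_eq, add_comm j N]; exact hgeom j) hg
  refine ⟨hconv, ?_⟩
  -- min (-η x) (-η y) = -η * max x y
  have hminmax : ∀ x y : ℝ, min (-η * x) (-η * y) = -η * max x y := by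
    intro x y
    rcases le_total x y with h | h
    · rw [max_eq_right h, min_eq_right (mul_le_mul_of_nonpos_left h (by linarith))]
    · rw [max_eq_left h, min_eq_left (mul_le_mul_of_nonpos_left h (by linarith))]
  -- J k i = min (-η r i) (-η a k) for k ≥ 1
  have hJa : ∀ k, 1 ≤ k → ∀ i, J k i = min (-η * r i) (-η * a k) := by
    intro k hk
    induction k, hk using Nat.le_induction with
    | base =>
      intro i
      rw [hJ 0 i]
      have : ∑ i', p i' * J 0 i' = 0 := by
        apply Finset.sum_eq_zero
        intro i' _
        rw [hJ0 i']; ring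
      rw [this, add_zero, ha1]
      congr 1
      field_simp
    | succ k hk ih =>
      intro i
      rw [hJ k i]
      have hsum : ∑ i', p i' * J k i' = -η * (∑ i', p i' * max (a k) (r i')) := by
        rw [Finset.mul_sum]
        apply Finset.sum_congr rfl
        intro i' _
        rw [ih i', hminmax, max_comm]
        ring
      have hβak : β (a k) = (∑ i', p i' * max (a k) (r i')) - τ / η := hβ (a k)
      rw [hsum, ha k hk]
      have : τ + -η * (∑ i', p i' * max (a k) (r i')) = -η * β (a k) := by
        rw [hβak]
        field_simp
        ring
      rw [this]
  intro i
  have hlim : Filter.Tendsto (fun k => min (-η * r i) (-η * a k)) Filter.atTop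
      (nhds (min (-η * r i) (-η * αstar))) :=
    Filter.Tendsto.min tendsto_const_nhds (hconv.const_mul (-η))
  apply hlim.congr'
  filter_upwards [Filter.eventually_ge_atTop 1] with k hk
  exact (hJa k hk i).symm
end

section
/- The function J*(r) = min{−η r, −η α*}, where α* is the unique fixed point of β(x) = E[max{x,R}] − τ/η, satisfies the Bellman equation J*(r_i) = min{−η r_i, τ + Σ_{i'} p_{i'} J*(r_{i'})} for all i. In particular τ + Σ_{i'} p_{i'} J*(r_{i'}) = −η α*. -/
open Finset

/-- J*(r) = min{−η r, −η α*} satisfies the Bellman equation, and the continuing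
cost equals −η α*. -/
theorem stmt5 {n : ℕ} (r : Fin n → ℝ) (hr : StrictMono r)
    (p : Fin n → ℝ) (hp0 : ∀ i, 0 ≤ p i) (hp1 : ∑ i, p i = 1)
    (τ η : ℝ) (hτ : 0 < τ) (hη : 0 < η)
    (β : ℝ → ℝ) (hβ : ∀ x, β x = (∑ i, p i * max x (r i)) - τ / η)
    (m : Fin n) (hm : 0 < p m) (hmmax : ∀ i, 0 < p i → i ≤ m)
    (αstar : ℝ) (hαle : αstar ≤ r m) (hαfix : β αstar = αstar)
    (Jstar : Fin n → ℝ) (hJstar : ∀ i, Jstar i = min (-η * r i) (-η * αstar)) :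
    (∀ i : Fin n, Jstar i = min (-η * r i) (τ + ∑ i', p i' * Jstar i')) ∧
    τ + ∑ i', p i' * Jstar i' = -η * αstar := by
  have hsum : τ + ∑ i', p i' * Jstar i' = -η * αstar := by
    have h1 : ∀ i, p i * Jstar i = -η * (p i * max αstar (r i)) := by
      intro i
      rw [hJstar i]
      have : min (-η * r i) (-η * αstar) = -η * max (r i) αstar := by
        rcases le_total (r i) αstar with h | h
        · rw [max_eq_right h, min_eq_right (by nlinarith)]
        · rw [max_eq_left h, min_eq_left (by nlinarith)]
      rw [this, max_comm]; ring
    rw [Finset.sum_congr rfl (fun i _ => h1 i), ← Finset.mul_sum]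
    have hβα := hαfix
    rw [hβ] at hβα
    have : (∑ i, p i * max αstar (r i)) = αstar + τ / η := by linarith
    rw [this]
    field_simp
    ring
  refine ⟨fun i => ?_, hsum⟩
  rw [hsum, hJstar i]
end

section
/- Let A be a finite nonempty set and BR_1, BR_2 : A → A antitone functions on a linear order, and define inductively A_0 = A, B_k = BR_2(A_{k−1}), A_k = BR_1(B_k). Then for A_n and B_n (n = |A| iterations): every element of A_n is BR_1 of a unique element of B_n and every element of B_n is BR_2 of a unique element of A_n, |A_n| = |B_n|, and if the elements are listed in increasing order Φ_1 < ... < Φ_N and Ψ_1 < ... < Ψ_N, then Φ_1 = BR_1(Ψ_N) and Ψ_N = BR_2(Φ_1), so (Φ_1, Ψ_N) is a Nash equilibrium pair. -/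
open Finset

/-- The inductive best-response elimination: after N = |A| iterations, BR1 and
BR2 biject the surviving sets, which have equal cardinality, and the pair
(smallest surviving Φ, largest surviving Ψ) is a Nash equilibrium. -/
theorem stmt14 {α : Type*} [LinearOrder α] [Fintype α] [Nonempty α]
    (BR1 BR2 : α → α) (h1 : Antitone BR1) (h2 : Antitone BR2)
    (A B : ℕ → Finset α)
    (hA0 : A 0 = Finset.univ)
    (hB : ∀ k, B (k + 1) = (A k).image BR2)
    (hA : ∀ k, A (k + 1) = (B (k + 1)).image BR1) :
    (∀ a ∈ A (Fintype.card α), ∃! b, b ∈ B (Fintype.card α) ∧ BR1 b = a) ∧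
    (∀ b ∈ B (Fintype.card α), ∃! a, a ∈ A (Fintype.card α) ∧ BR2 a = b) ∧
    (A (Fintype.card α)).card = (B (Fintype.card α)).card ∧
    ∃ (hAne : (A (Fintype.card α)).Nonempty)
      (hBne : (B (Fintype.card α)).Nonempty),
      (A (Fintype.card α)).min' hAne = BR1 ((B (Fintype.card α)).max' hBne) ∧
      (B (Fintype.card α)).max' hBne = BR2 ((A (Fintype.card α)).min' hAne) := by
  set N := Fintype.card α with hNdef
  -- the A chain is decreasing
  have hsub : ∀ k, A (k + 1) ⊆ A k := by
    intro k
    induction k with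
    | zero => rw [hA0]; exact Finset.subset_univ _
    | succ n ih =>
      calc A (n + 2) = ((A (n + 1)).image BR2).image BR1 := by
              rw [hA (n + 1), hB (n + 1)]
        _ ⊆ ((A n).image BR2).image BR1 :=
              Finset.image_subset_image (Finset.image_subset_image ih)
        _ = A (n + 1) := by rw [← hB n, ← hA n]
  have hne : ∀ k, (A k).Nonempty := by
    intro k
    induction k with
    | zero => rw [hA0]; exact Finset.univ_nonempty
    | succ n ih =>
      rw [hA n, hB n]
      exact (ih.image _).image _
  -- stabilization within N steps
  have hstab : ∃ k < N, A (k + 1) = A k := by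
    by_contra h
    push_neg at h
    have hdec : ∀ k < N, (A (k + 1)).card < (A k).card := fun k hk =>
      Finset.card_lt_card (Finset.ssubset_iff_subset_ne.mpr ⟨hsub k, h k hk⟩)
    have key : ∀ k ≤ N, (A k).card + k ≤ N := by
      intro k hk
      induction k with
      | zero => simp [hA0, hNdef]
      | succ n ih =>
        have h1 := hdec n (lt_of_lt_of_le (Nat.lt_succ_self n) hk)
        have h2 := ih (le_of_lt (Nat.lt_of_succ_le hk))
        omega
    have h3 := key N le_rfl
    have h4 := (hne N).card_pos
    omega
  obtain ⟨k, hkN, hfix⟩ := hstab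
  have hconst : ∀ m, k ≤ m → A m = A k := by
    intro m hm
    induction m with
    | zero => rw [Nat.le_zero.mp hm]
    | succ n ih =>
      rcases Nat.lt_or_ge k (n + 1) with h | h
      · have hn : k ≤ n := Nat.lt_succ_iff.mp h
        calc A (n + 1) = ((A n).image BR2).image BR1 := by rw [hA n, hB n]
          _ = ((A k).image BR2).image BR1 := by rw [ih hn]
          _ = A (k + 1) := by rw [hA k, hB k]
          _ = A k := hfix
      · rw [le_antisymm hm h]
  have hN1 : 1 ≤ N := Fintype.card_pos
  obtain ⟨n, hn⟩ : ∃ n, N = n + 1 := ⟨N - 1, by omega⟩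
  have hkn : k ≤ n := by omega
  have hTS : B N = (A N).image BR2 := by
    rw [hn, hB n, hconst n hkn, hconst (n + 1) (by omega)]
  have hST : A N = (B N).image BR1 := by rw [hn, hA n]
  set S := A N
  set T := B N
  have hSne : S.Nonempty := hne N
  have hTne : T.Nonempty := by rw [hTS]; exact hSne.image _
  have hc1 : S.card ≤ T.card := hST ▸ Finset.card_image_le
  have hc2 : T.card ≤ S.card := hTS ▸ Finset.card_image_le
  have hcard : S.card = T.card := le_antisymm hc1 hc2
  have hinj1 : Set.InjOn BR1 T := by
    apply Finset.injOn_of_card_image_eq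
    rw [← hST]; exact hcard
  have hinj2 : Set.InjOn BR2 S := by
    apply Finset.injOn_of_card_image_eq
    rw [← hTS]; exact hcard.symm
  refine ⟨?_, ?_, hcard, hSne, hTne, ?_, ?_⟩
  · intro a ha
    rw [hST] at ha
    obtain ⟨b, hb, hba⟩ := Finset.mem_image.mp ha
    exact ⟨b, ⟨hb, hba⟩, fun b' ⟨hb', hb'a⟩ => hinj1 hb' hb (by rw [hba, hb'a])⟩
  · intro b hb
    rw [hTS] at hb
    obtain ⟨a, ha, hab⟩ := Finset.mem_image.mp hb
    exact ⟨a, ⟨ha, hab⟩, fun a' ⟨ha', ha'b⟩ => hinj2 ha' ha (by rw [hab, ha'b])⟩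
  · have hmem : BR1 (T.max' hTne) ∈ S := by
      rw [hST]; exact Finset.mem_image_of_mem _ (T.max'_mem hTne)
    refine le_antisymm (S.min'_le _ hmem) ?_
    have hminS : S.min' hSne ∈ T.image BR1 := by
      rw [← hST]; exact S.min'_mem hSne
    obtain ⟨b, hb, hbmin⟩ := Finset.mem_image.mp hminS
    calc BR1 (T.max' hTne) ≤ BR1 b := h1 (T.le_max' b hb)
      _ = S.min' hSne := hbmin
  · have hmem : BR2 (S.min' hSne) ∈ T := by
      rw [hTS]; exact Finset.mem_image_of_mem _ (S.min'_mem hSne)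
    refine le_antisymm ?_ (T.le_max' _ hmem)
    have hmaxT : T.max' hTne ∈ S.image BR2 := by
      rw [← hTS]; exact T.max'_mem hTne
    obtain ⟨a, ha, hamax⟩ := Finset.mem_image.mp hmaxT
    calc T.max' hTne = BR2 a := hamax.symm
      _ ≤ BR2 (S.min' hSne) := h2 (S.min'_le a ha)
end

section
/- Consider the monotone value-iteration operator T acting on functions H on states {(r_i, r_j)} ∪ {(r_i, t)}: TH(r_i, t) = min{−η_1 r_i, τ + Σ_{i'} p^{(1)}_{i'} H(r_{i'}, t)} and TH(r_i, r_j) = min{C_s^H(r_i, r_j), C_c^H(r_i, r_j)}, where C_s^H(r_i,r_j) = ε(ν_1(−η_1 r_i) + ν_2(τ + Σ_{i'}p^{(1)}_{i'}H(r_{i'},t))) + (1−ε)(−η_1 r_i) and C_c^H(r_i,r_j) = ε(τ + Σ_{i'}p^{(1)}_{i'}H(r_{i'},t)) + (1−ε)(τ + Σ_{i',j'}p_{i',j'}H(r_{i'},r_{j'})), with ε = ε(r_i,r_j) ∈ [0,1], ν_1 + ν_2 = 1, ν_1, ν_2 ≥ 0, and p^{(1)} the first marginal of the joint p.m.f. p.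 If H satisfies H(r_i, t) ≤ H(r_i, r_j) for all i, j, then TH also satisfies TH(r_i, t) ≤ TH(r_i, r_j) for all i, j. -/
open Finset

/-- The Bellman operator preserves the invariant "continuing alone is no worse
than continuing with a competitor": if H(r_i,t) ≤ H(r_i,r_j) for all i,j, then
TH(r_i,t) ≤ TH(r_i,r_j) for all i,j. -/
theorem stmt17 {n : ℕ} (r : Fin n → ℝ) (p : Fin n → Fin n → ℝ)
    (hp0 : ∀ i j, 0 ≤ p i j) (hp1 : ∑ i, ∑ j, p i j = 1)
    (τ η1 ν1 ν2 : ℝ) (hτ : 0 ≤ τ) (hη : 0 < η1)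
    (hν1 : 0 ≤ ν1) (hν2 : 0 ≤ ν2) (hν : ν1 + ν2 = 1)
    (ε : Fin n → Fin n → ℝ) (hε : ∀ i j, ε i j ∈ Set.Icc (0 : ℝ) 1)
    (Ht : Fin n → ℝ) (Hp : Fin n → Fin n → ℝ)
    (hH : ∀ i j, Ht i ≤ Hp i j) :
    ∀ i j : Fin n,
      min (-η1 * r i) (τ + ∑ i', (∑ j', p i' j') * Ht i') ≤
      min
        (ε i j * (ν1 * (-η1 * r i) +
            ν2 * (τ + ∑ i', (∑ j', p i' j') * Ht i')) +
          (1 - ε i j) * (-η1 * r i))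
        (ε i j * (τ + ∑ i', (∑ j', p i' j') * Ht i') +
          (1 - ε i j) * (τ + ∑ i', ∑ j', p i' j' * Hp i' j')) := by
  intro i j
  obtain ⟨hε0, hε1⟩ := hε i j
  set A := -η1 * r i with hA
  set B := τ + ∑ i', (∑ j', p i' j') * Ht i' with hB
  have hBC : (∑ i', (∑ j', p i' j') * Ht i') ≤ ∑ i', ∑ j', p i' j' * Hp i' j' := by
    apply Finset.sum_le_sum
    intro i' _
    rw [Finset.sum_mul]
    exact Finset.sum_le_sum fun j' _ =>
      mul_le_mul_of_nonneg_left (hH i' j') (hp0 i' j')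
  have hν1' : ν1 = 1 - ν2 := by linarith
  subst hν1'
  rcases le_total A B with h | h
  · rw [min_eq_left h]
    have h3 : A ≤ τ + ∑ i', ∑ j', p i' j' * Hp i' j' := by rw [hB] at h; linarith
    apply le_min
    · nlinarith [mul_nonneg (mul_nonneg hε0 hν2) (sub_nonneg.2 h)]

    · nlinarith [mul_nonneg hε0 (sub_nonneg.2 h),
        mul_nonneg (sub_nonneg.2 hε1) (sub_nonneg.2 h3)]
  · rw [min_eq_right h]
    have h3 : B ≤ τ + ∑ i', ∑ j', p i' j' * Hp i' j' := by rw [hB]; linarith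
    apply le_min
    · have h4 : ε i j * ν2 ≤ 1 :=
        mul_le_one₀ hε1 hν2 (by linarith)
      nlinarith [mul_nonneg (sub_nonneg.2 h) (sub_nonneg.2 h4)]
    · nlinarith [mul_nonneg (sub_nonneg.2 hε1) (sub_nonneg.2 h3)]
end
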